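/- arXiv:1703.02077 — 10 statements merged into one kernel-verified Lean document; each statement's English description precedes it below -/
import Mathlib

section
/- Let T₁ and T₂ be reduction operators relative to a well-ordered set (G, <). If ker(T₂) ⊆ ker(T₁), then every T₁-normal form generator is a T₂-normal form, i.e., for every g ∈ G, T₁(g) = g implies T₂(g) = g. -/
/-- A reduction operator relative to a well-ordered set `(G, <)`: an idempotent
`K`-linear endomorphism `T` of `G →₀ K` such that `T g ≤ g` for every generator `g`,
i.e. either `T` fixes the basis vector of `g`, or every generator in the support of
its image is strictly smaller than `g`. -/
def IsReductionOperator {K G : Type*} [Field K] [LinearOrder G]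
    (T : (G →₀ K) →ₗ[K] (G →₀ K)) : Prop :=
  T ∘ₗ T = T ∧ ∀ g : G,
    T (Finsupp.single g 1) = Finsupp.single g 1 ∨
      ∀ h ∈ (T (Finsupp.single g 1)).support, h < g

/-!
If `T₂ g ≠ g`, then `y := T₂ g` is supported below `g` and `g - y ∈ ker T₂ ⊆ ker T₁`,
so `T₁ y = T₁ g = g`. But a reduction operator maps vectors supported below `g` to
vectors supported below `g`, so `g` cannot occur in `T₁ y`.
-/

namespace IsReductionOperator

open Finsupp

variable {K G : Type*} [Field K] [LinearOrder G] {T : (G →₀ K) →ₗ[K] (G →₀ K)}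

theorem apply_apply (hT : IsReductionOperator T) (v : G →₀ K) : T (T v) = T v :=
  LinearMap.congr_fun hT.1 v

theorem sub_apply_mem_ker (hT : IsReductionOperator T) (v : G →₀ K) :
    v - T v ∈ LinearMap.ker T := by
  rw [LinearMap.mem_ker, map_sub, hT.apply_apply, sub_self]

theorem single_mem_supported_Iio (hT : IsReductionOperator T) (g : G) :
    T (single g 1) = single g 1 ∨ T (single g 1) ∈ supported K K (Set.Iio g) :=
  (hT.2 g).imp_right fun h => (mem_supported K _).2 h

theorem map_supported_Iio_le (hT : IsReductionOperator T) (g : G) :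
    (supported K K (Set.Iio g)).map T ≤ supported K K (Set.Iio g) := by
  refine Submodule.map_le_iff_le_comap.2 <|
    (supported_eq_span_single K _).le.trans <| Submodule.span_le.2 ?_
  rintro _ ⟨a, ha, rfl⟩
  change T (single a 1) ∈ supported K K (Set.Iio g)
  rcases hT.single_mem_supported_Iio a with hfix | hlt
  · rw [hfix]; exact single_mem_supported K 1 ha
  · exact supported_mono (Set.Iio_subset_Iio ha.le) hlt

end IsReductionOperator

theorem stmt_1_general {K G : Type*} [Field K] [LinearOrder G]
    (T₁ T₂ : (G →₀ K) →ₗ[K] (G →₀ K))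
    (h₁ : IsReductionOperator T₁) (h₂ : IsReductionOperator T₂)
    (hker : LinearMap.ker T₂ ≤ LinearMap.ker T₁) :
    ∀ g : G, T₁ (Finsupp.single g 1) = Finsupp.single g 1 →
      T₂ (Finsupp.single g 1) = Finsupp.single g 1 := by
  intro g hg
  refine (h₂.single_mem_supported_Iio g).resolve_right fun hy => ?_
  have hT₁y : T₁ (T₂ (Finsupp.single g 1)) = Finsupp.single g 1 := by
    have := hker (h₂.sub_apply_mem_ker (Finsupp.single g 1))
    rwa [LinearMap.mem_ker, map_sub, sub_eq_zero, hg, eq_comm] at this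
  have hsupp := (Finsupp.mem_supported K _).1 (h₁.map_supported_Iio_le g ⟨_, hy, rfl⟩)
  rw [hT₁y, Finsupp.support_single g one_ne_zero, Finset.coe_singleton,
    Set.singleton_subset_iff] at hsupp
  exact lt_irrefl g hsupp

theorem stmt_1 {K G : Type*} [Field K] [LinearOrder G] [WellFoundedLT G]
    (T₁ T₂ : (G →₀ K) →ₗ[K] (G →₀ K))
    (h₁ : IsReductionOperator T₁) (h₂ : IsReductionOperator T₂)
    (hker : LinearMap.ker T₂ ≤ LinearMap.ker T₁) :
    ∀ g : G, T₁ (Finsupp.single g 1) = Finsupp.single g 1 →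
      T₂ (Finsupp.single g 1) = Finsupp.single g 1 :=
  stmt_1_general T₁ T₂ h₁ h₂ hker
end

section
/- Let T be a reduction operator relative to a well-ordered set (G, <). Then the set of T-normal form generators {g ∈ G : T(g) = g} is a basis of the image of T. -/
/-- The family of -normal-form basis vectors, indexed by the generators fixed by . -/
theorem stmt_2 {K G : Type*} [Field K] [LinearOrder G] [WellFoundedLT G]
    (T : (G →₀ K) →ₗ[K] (G →₀ K)) (hT : IsReductionOperator T) :
    LinearIndependent K
      (fun g : {g : G // T (Finsupp.single g 1) = Finsupp.single g 1} =>
        (Finsupp.single g.1 1 : G →₀ K)) ∧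
    Submodule.span K
      (Set.range fun g : {g : G // T (Finsupp.single g 1) = Finsupp.single g 1} =>
        (Finsupp.single g.1 1 : G →₀ K)) = LinearMap.range T := by
  set S : Set (G →₀ K) :=
    Set.range fun g : {g : G // T (Finsupp.single g 1) = Finsupp.single g 1} =>
      (Finsupp.single g.1 1 : G →₀ K) with hS
  -- helper: decompose T z as a sum
  have helper : ∀ z : G →₀ K,
      (∀ h ∈ z.support, T (Finsupp.single h 1) ∈ Submodule.span K S) →
      T z ∈ Submodule.span K S := by
    intro z hz
    have hz' : z = z.sum fun h a => a • Finsupp.single h (1 : K) := by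
      simp [Finsupp.smul_single, Finsupp.sum_single]
    rw [hz', map_finsuppSum]
    refine Submodule.sum_mem _ fun h hh => ?_
    simp only [map_smul]
    exact Submodule.smul_mem _ _ (hz h hh)
  have idem : ∀ z : G →₀ K, T (T z) = T z := fun z => by
    have := congrArg (fun f => f z) hT.1
    simpa using this
  have key : ∀ g : G, T (Finsupp.single g 1) ∈ Submodule.span K S := by
    intro g
    induction g using WellFoundedLT.induction with
    | _ g ih =>
      rcases hT.2 g with hfix | hlt
      · rw [hfix]
        exact Submodule.subset_span ⟨⟨g, hfix⟩, rfl⟩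
      · have := helper (T (Finsupp.single g 1)) fun h hh => ih h (hlt h hh)
        rwa [idem] at this
  constructor
  · have : LinearIndependent K (fun g : G => (Finsupp.single g (1 : K) : G →₀ K)) := by
      simpa using (Finsupp.basisSingleOne (R := K) (ι := G)).linearIndependent
    exact this.comp _ Subtype.val_injective
  · apply le_antisymm
    · rw [Submodule.span_le]
      rintro _ ⟨g, rfl⟩
      exact ⟨Finsupp.single g.1 1, g.2⟩
    · rintro _ ⟨x, rfl⟩
      exact helper x fun h _ => key h
end

section
/- Let T₁ and T₂ be reduction operators relative to a well-ordered set (G, <) with ker(T₁) = ker(T₂). Then T₁ = T₂. -/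
private lemma agree_aux {K G : Type*} [Field K] [LinearOrder G]
    (T₁ T₂ : (G →₀ K) →ₗ[K] (G →₀ K)) (v : G →₀ K)
    (h : ∀ a ∈ v.support, T₁ (Finsupp.single a 1) = T₂ (Finsupp.single a 1)) :
    T₁ v = T₂ v := by
  have hv : v = v.sum (fun a c => c • Finsupp.single a 1) := by
    simp [Finsupp.smul_single, Finsupp.sum_single]
  rw [hv, map_finsuppSum, map_finsuppSum]
  exact Finsupp.sum_congr fun a ha => by rw [map_smul, map_smul, h a ha]

private lemma key_aux {K G : Type*} [Field K] [LinearOrder G]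
    (T₁ T₂ : (G →₀ K) →ₗ[K] (G →₀ K))
    (h₁ : IsReductionOperator T₁)
    (hker : LinearMap.ker T₁ = LinearMap.ker T₂) (g : G)
    (IH : ∀ h < g, T₁ (Finsupp.single h 1) = T₂ (Finsupp.single h 1))
    (hs : ∀ h ∈ (T₁ (Finsupp.single g 1)).support, h < g) :
    T₂ (Finsupp.single g 1) = T₁ (Finsupp.single g 1) := by
  have idem : ∀ x, T₁ (T₁ x) = T₁ x := fun x => by
    have := LinearMap.ext_iff.mp h₁.1 x
    simpa using this
  have hk : Finsupp.single g 1 - T₁ (Finsupp.single g 1) ∈ LinearMap.ker T₁ := by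
    simp [LinearMap.mem_ker, map_sub, idem]
  rw [hker] at hk
  have h2 : T₂ (Finsupp.single g 1) = T₂ (T₁ (Finsupp.single g 1)) := by
    have := LinearMap.mem_ker.mp hk
    rw [map_sub, sub_eq_zero] at this
    exact this
  rw [h2, agree_aux T₂ T₁ _ (fun a ha => (IH a (hs a ha)).symm), idem]

theorem stmt_4 {K G : Type*} [Field K] [LinearOrder G] [WellFoundedLT G]
    (T₁ T₂ : (G →₀ K) →ₗ[K] (G →₀ K))
    (h₁ : IsReductionOperator T₁) (h₂ : IsReductionOperator T₂)
    (hker : LinearMap.ker T₁ = LinearMap.ker T₂) :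
    T₁ = T₂ := by
  have key : ∀ g : G, T₁ (Finsupp.single g 1) = T₂ (Finsupp.single g 1) := by
    intro g
    induction g using WellFoundedLT.induction with
    | _ g IH =>
      rcases h₁.2 g with hg1 | hg1
      · rcases h₂.2 g with hg2 | hg2
        · rw [hg1, hg2]
        · exact (key_aux T₂ T₁ h₂ hker.symm g (fun h hh => (IH h hh).symm) hg2)
      · exact (key_aux T₁ T₂ h₁ hker g IH hg1).symm
  exact Module.Basis.ext (Finsupp.basisSingleOne) fun g => by simpa using key g
end

section
/- Let V be a subspace of K⟨G⟩ for a well-ordered set (G, <). Then there exists a reduction operator T relative to (G, <) with ker(T) = V. -/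
open Finsupp Submodule

theorem Submodule.projection_apply_eq_of_sub_mem {R E : Type*} [Ring R] [AddCommGroup E]
    [Module R E] {p q : Submodule R E} (hpq : IsCompl p q) {x y : E} (hy : y ∈ p)
    (hxy : x - y ∈ q) : p.projection q hpq x = y := by
  have h := (p.projection q hpq).map_sub x y
  rw [projection_apply_of_mem_right hpq hxy, projection_apply_of_mem_left hpq hy] at h
  exact sub_eq_zero.1 h.symm

namespace ReductionOperator

section Support

variable {G M : Type*} [LinearOrder G] [AddGroup M]

theorem support_max_single_le (g : G) (a : M) : (single g a).support.max ≤ g :=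
  (Finset.max_mono support_single_subset).trans (by simp)

theorem support_max_add_le (x z : G →₀ M) :
    (x + z).support.max ≤ x.support.max ⊔ z.support.max :=
  (Finset.max_mono support_add).trans_eq Finset.max_union

theorem support_max_sub_le (x z : G →₀ M) :
    (x - z).support.max ≤ x.support.max ⊔ z.support.max :=
  (Finset.max_mono support_sub).trans_eq Finset.max_union

theorem support_max_sub_lt {x z : G →₀ M} {g : G} (hx : x.support.max ≤ g)
    (hz : z.support.max ≤ g) (h : x g = z g) : (x - z).support.max < g := by
  refine lt_of_le_of_ne ((support_max_sub_le x z).trans (sup_le hx hz)) fun heq => ?_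
  have := mem_support_iff.1 (Finset.mem_of_max heq)
  simp [h] at this

end Support

variable {K G : Type*} [DivisionRing K] [LinearOrder G]

def leadingGens (V : Submodule K (G →₀ K)) : Set G := {g | ∃ v ∈ V, v.support.max = g}

variable {V : Submodule K (G →₀ K)}

theorem exists_mem_support_max_sub_lt {g : G} (hg : g ∈ leadingGens V) {x : G →₀ K}
    (hx : x.support.max ≤ g) : ∃ v ∈ V, (x - v).support.max < g := by
  obtain ⟨v, hvV, hv⟩ := hg
  have hvg : v g ≠ 0 := mem_support_iff.1 (Finset.mem_of_max hv)
  refine ⟨(x g / v g) • v, V.smul_mem _ hvV, support_max_sub_lt hx ?_ ?_⟩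
  · exact (Finset.max_mono support_smul).trans hv.le
  · simp [div_mul_cancel₀ _ hvg]

theorem disjoint_supported_compl_leadingGens :
    Disjoint (supported K K (leadingGens V)ᶜ) V := by
  refine disjoint_def.2 fun v hvS hvV => ?_
  by_contra hv
  obtain ⟨g, hg⟩ := Finset.max_of_nonempty (support_nonempty_iff.2 hv)
  exact hvS (Finset.mem_of_max hg) ⟨v, hvV, hg⟩

variable [WellFoundedLT G]

theorem exists_normalForm (x : G →₀ K) :
    ∃ y ∈ supported K K (leadingGens V)ᶜ, x - y ∈ V ∧ y.support.max ≤ x.support.max := by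
  generalize hd : x.support.max = d
  induction d using WellFoundedLT.induction generalizing x with
  | _ d IH =>
    cases d with
    | bot =>
      rw [Finset.max_eq_bot, support_eq_empty] at hd
      exact ⟨0, zero_mem _, by simp [hd], le_rfl⟩
    | coe g =>
      by_cases hg : g ∈ leadingGens V
      · obtain ⟨v, hvV, hlt⟩ := exists_mem_support_max_sub_lt hg hd.le
        obtain ⟨y, hyS, hyV, hy⟩ := IH _ hlt (x - v) rfl
        refine ⟨y, hyS, ?_, hy.trans hlt.le⟩
        convert add_mem hyV hvV using 1
        abel
      · set z := single g (x g)
        have hz : z.support.max ≤ g := support_max_single_le g (x g)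
        have hlt : (x - z).support.max < g := support_max_sub_lt hd.le hz (by simp [z])
        obtain ⟨y, hyS, hyV, hy⟩ := IH _ hlt (x - z) rfl
        refine ⟨y + z, add_mem hyS (single_mem_supported K _ hg), ?_, ?_⟩
        · simpa [sub_sub, add_comm] using hyV
        · exact (support_max_add_le y z).trans (sup_le (hy.trans hlt.le) hz)

theorem isCompl_supported_compl_leadingGens :
    IsCompl (supported K K (leadingGens V)ᶜ) V := by
  refine ⟨disjoint_supported_compl_leadingGens, codisjoint_iff_exists_add_eq.2 fun x => ?_⟩
  obtain ⟨y, hyS, hyV, -⟩ := exists_normalForm (V := V) x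
  exact ⟨y, x - y, hyS, hyV, add_sub_cancel y x⟩

variable (V) in
noncomputable def normalForm : (G →₀ K) →ₗ[K] (G →₀ K) :=
  (supported K K (leadingGens V)ᶜ).projection V isCompl_supported_compl_leadingGens

theorem normalForm_comp_self : normalForm V ∘ₗ normalForm V = normalForm V :=
  isIdempotentElem_projection _

theorem ker_normalForm : LinearMap.ker (normalForm V) = V :=
  ker_projection _

theorem support_max_normalForm_le (x : G →₀ K) :
    (normalForm V x).support.max ≤ x.support.max := by
  obtain ⟨y, hyS, hyV, hy⟩ := exists_normalForm (V := V) x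
  rwa [normalForm, projection_apply_eq_of_sub_mem _ hyS hyV]

theorem normalForm_single_of_notMem {g : G} (hg : g ∉ leadingGens V) :
    normalForm V (single g 1) = single g 1 :=
  projection_apply_of_mem_left _ (single_mem_supported K _ hg)

theorem support_max_normalForm_single_lt {g : G} (hg : g ∈ leadingGens V) :
    (normalForm V (single g 1)).support.max < g := by
  obtain ⟨v, hvV, hlt⟩ := exists_mem_support_max_sub_lt hg (support_max_single_le g (1 : K))
  have hv : normalForm V v = 0 := by rwa [← LinearMap.mem_ker, ker_normalForm]
  calc (normalForm V (single g 1)).support.max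
      = (normalForm V (single g 1 - v)).support.max := by rw [map_sub, hv, sub_zero]
    _ ≤ (single g 1 - v).support.max := support_max_normalForm_le _
    _ < g := hlt

end ReductionOperator

open ReductionOperator

theorem stmt_5 {K G : Type*} [Field K] [LinearOrder G] [WellFoundedLT G]
    (V : Submodule K (G →₀ K)) :
    ∃ T : (G →₀ K) →ₗ[K] (G →₀ K), IsReductionOperator T ∧ LinearMap.ker T = V := by
  refine ⟨normalForm V, ⟨normalForm_comp_self, fun g => ?_⟩, ker_normalForm⟩
  by_cases hg : g ∈ leadingGens V
  · exact Or.inr fun h hh => WithBot.coe_lt_coe.1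
      ((Finset.le_max hh).trans_lt (support_max_normalForm_single_lt hg))
  · exact Or.inl (normalForm_single_of_notMem hg)
end

section
/- The set RO(G, <) of reduction operators relative to a well-ordered set (G, <), ordered by T₁ ⪯ T₂ iff ker(T₂) ⊆ ker(T₁), is a lattice, with meet T₁ ∧ T₂ = ker⁻¹(ker(T₁) + ker(T₂)) and join T₁ ∨ T₂ = ker⁻¹(ker(T₁) ∩ ker(T₂)), where ker⁻¹ is the inverse of the kernel bijection between RO(G, <) and subspaces of K⟨G⟩. -/
/-!
Every subspace `V` of `K⟨G⟩` is the kernel of a reduction operator. The generators that are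
not leading monomials of elements of `V` span a complement `N` of `V`: the leading monomial of
a nonzero vector of `V ∩ N` would be excluded from `N`, and well-foundedness lets one reduce every
generator modulo `V` into `N`. The projection onto `N` along `V` is then a reduction operator with kernel `V`, and
the meet and join are this operator for `ker T₁ + ker T₂` and `ker T₁ ∩ ker T₂`.
-/

open Finsupp Submodule

section KerInv

variable {K G : Type*} [Field K] [LinearOrder G]

def leadingMonomials (V : Submodule K (G →₀ K)) : Set G :=
  {g | ∃ v ∈ V, g ∈ v.support ∧ ∀ h ∈ v.support, h ≤ g}

def normalForms (V : Submodule K (G →₀ K)) : Submodule K (G →₀ K) :=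
  supported K K (leadingMonomials V)ᶜ

theorem max'_support_mem_leadingMonomials {V : Submodule K (G →₀ K)} {v : G →₀ K}
    (hv : v ∈ V) (hne : v.support.Nonempty) : v.support.max' hne ∈ leadingMonomials V :=
  ⟨v, hv, v.support.max'_mem hne, fun h hh => v.support.le_max' h hh⟩

theorem disjoint_normalForms (V : Submodule K (G →₀ K)) : Disjoint V (normalForms V) := by
  rw [Submodule.disjoint_def]
  intro v hvV hvN
  by_contra hne
  have hsupp : v.support.Nonempty := support_nonempty_iff.2 hne
  exact (mem_supported K v).1 hvN (v.support.max'_mem hsupp)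
    (max'_support_mem_leadingMonomials hvV hsupp)

theorem single_mem_sup_normalForms [WellFoundedLT G] (V : Submodule K (G →₀ K)) (g : G) :
    single g (1 : K) ∈ V ⊔ normalForms V := by
  induction g using WellFoundedLT.induction with
  | _ g ih =>
  have below : supported K K (Set.Iio g) ≤ V ⊔ normalForms V := by
    rw [supported_eq_span_single, span_le]
    rintro _ ⟨h, hh, rfl⟩
    exact ih h hh
  by_cases hg : g ∈ leadingMonomials V
  · obtain ⟨v, hvV, hgv, hvle⟩ := hg
    have hvg : v g ≠ 0 := mem_support_iff.1 hgv
    -- normalising `v` to leading coefficient `1` leaves a remainder strictly below `g`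
    have hrem : (v g)⁻¹ • v - single g 1 ∈ supported K K (Set.Iio g) := by
      intro h hh
      rw [Finset.mem_coe, mem_support_iff] at hh
      rcases eq_or_ne h g with rfl | hne
      · simp [hvg] at hh
      · have hvh : v h ≠ 0 := by
          contrapose! hh
          simp [hh, single_eq_of_ne hne]
        exact lt_of_le_of_ne (hvle h (mem_support_iff.2 hvh)) hne
    have := sub_mem (mem_sup_left (smul_mem V (v g)⁻¹ hvV)) (below hrem)
    rwa [sub_sub_cancel] at this
  · exact mem_sup_right (single_mem_supported K 1 hg)

theorem isCompl_normalForms [WellFoundedLT G] (V : Submodule K (G →₀ K)) :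
    IsCompl (normalForms V) V := by
  refine ⟨(disjoint_normalForms V).symm, codisjoint_iff.2 (eq_top_iff.2 ?_)⟩
  rw [← supported_univ, supported_eq_span_single, span_le, sup_comm]
  rintro _ ⟨g, -, rfl⟩
  exact single_mem_sup_normalForms V g

variable [WellFoundedLT G]

/-- The operator `ker⁻¹ V` of the paper: the projection onto the normal forms along `V`. -/
noncomputable def kerInv (V : Submodule K (G →₀ K)) : (G →₀ K) →ₗ[K] (G →₀ K) :=
  (normalForms V).projection V (isCompl_normalForms V)

theorem ker_kerInv (V : Submodule K (G →₀ K)) : LinearMap.ker (kerInv V) = V :=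
  ker_projection _

theorem kerInv_single_lt {V : Submodule K (G →₀ K)} {g : G} (hg : g ∈ leadingMonomials V) :
    ∀ h ∈ (kerInv V (single g 1)).support, h < g := by
  set u := kerInv V (single g 1)
  have huN : ↑u.support ⊆ (leadingMonomials V)ᶜ :=
    (mem_supported K u).1 (projection_apply_mem _ _)
  have hxV : single g 1 - u ∈ V := sub_projection_mem _ _
  have hx_apply : ∀ k ≠ g, (single g (1 : K) - u) k = -u k := fun k hk => by
    simp [single_eq_of_ne hk]
  intro h hh
  have hhg : h ≠ g := fun e => huN hh (e ▸ hg)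
  by_contra! hgh
  have hhx : h ∈ (single g 1 - u).support := by
    rw [mem_support_iff, hx_apply h hhg, neg_ne_zero]
    exact mem_support_iff.1 hh
  -- the leading monomial of `single g 1 - u ∈ V` lies above `g`, hence in the support of `u`
  have hne : (single g 1 - u).support.Nonempty := ⟨h, hhx⟩
  set m := (single g 1 - u).support.max' hne
  have hmg : m ≠ g := (lt_of_lt_of_le (lt_of_le_of_ne hgh hhg.symm) (Finset.le_max' _ h hhx)).ne'
  have hmu : m ∈ u.support := by
    have := Finset.max'_mem _ hne
    rwa [mem_support_iff, hx_apply m hmg, neg_ne_zero, ← mem_support_iff] at this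
  exact huN hmu (max'_support_mem_leadingMonomials hxV hne)

theorem isReductionOperator_kerInv (V : Submodule K (G →₀ K)) :
    IsReductionOperator (kerInv V) := by
  refine ⟨isIdempotentElem_projection _, fun g => ?_⟩
  by_cases hg : g ∈ leadingMonomials V
  · exact Or.inr (kerInv_single_lt hg)
  · exact Or.inl (projection_apply_of_mem_left _ (single_mem_supported K 1 hg))

end KerInv

theorem stmt_6_general {K G : Type*} [Field K] [LinearOrder G] [WellFoundedLT G]
    (T₁ T₂ : (G →₀ K) →ₗ[K] (G →₀ K)) :
    ∃ M J : (G →₀ K) →ₗ[K] (G →₀ K),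
      IsReductionOperator M ∧ IsReductionOperator J ∧
      LinearMap.ker M = LinearMap.ker T₁ ⊔ LinearMap.ker T₂ ∧
      LinearMap.ker J = LinearMap.ker T₁ ⊓ LinearMap.ker T₂ ∧
      -- M is a lower bound of T₁ and T₂ for ⪯
      LinearMap.ker T₁ ≤ LinearMap.ker M ∧ LinearMap.ker T₂ ≤ LinearMap.ker M ∧
      -- M is the greatest lower bound
      (∀ C : (G →₀ K) →ₗ[K] (G →₀ K), IsReductionOperator C →
        LinearMap.ker T₁ ≤ LinearMap.ker C → LinearMap.ker T₂ ≤ LinearMap.ker C →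
        LinearMap.ker M ≤ LinearMap.ker C) ∧
      -- J is an upper bound of T₁ and T₂ for ⪯
      LinearMap.ker J ≤ LinearMap.ker T₁ ∧ LinearMap.ker J ≤ LinearMap.ker T₂ ∧
      -- J is the least upper bound
      (∀ C : (G →₀ K) →ₗ[K] (G →₀ K), IsReductionOperator C →
        LinearMap.ker C ≤ LinearMap.ker T₁ → LinearMap.ker C ≤ LinearMap.ker T₂ →
        LinearMap.ker C ≤ LinearMap.ker J) := by
  refine ⟨kerInv (LinearMap.ker T₁ ⊔ LinearMap.ker T₂),
    kerInv (LinearMap.ker T₁ ⊓ LinearMap.ker T₂), isReductionOperator_kerInv _,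
    isReductionOperator_kerInv _, ker_kerInv _, ker_kerInv _, ?_⟩
  simp only [ker_kerInv]
  exact ⟨le_sup_left, le_sup_right, fun _ _ => sup_le, inf_le_left, inf_le_right,
    fun _ _ => le_inf⟩

/-- Reduction operators, ordered by `T₁ ⪯ T₂ ↔ ker T₂ ⊆ ker T₁`, form a lattice: any two
reduction operators `T₁, T₂` have a meet `M` (greatest lower bound), with
`ker M = ker T₁ + ker T₂`, and a join `J` (least upper bound), with `ker J = ker T₁ ∩ ker T₂`. -/
theorem stmt_6 {K G : Type*} [Field K] [LinearOrder G] [WellFoundedLT G]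
    (T₁ T₂ : (G →₀ K) →ₗ[K] (G →₀ K))
    (h₁ : IsReductionOperator T₁) (h₂ : IsReductionOperator T₂) :
    ∃ M J : (G →₀ K) →ₗ[K] (G →₀ K),
      IsReductionOperator M ∧ IsReductionOperator J ∧
      LinearMap.ker M = LinearMap.ker T₁ ⊔ LinearMap.ker T₂ ∧
      LinearMap.ker J = LinearMap.ker T₁ ⊓ LinearMap.ker T₂ ∧
      -- M is a lower bound of T₁ and T₂ for ⪯
      LinearMap.ker T₁ ≤ LinearMap.ker M ∧ LinearMap.ker T₂ ≤ LinearMap.ker M ∧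
      -- M is the greatest lower bound
      (∀ C : (G →₀ K) →ₗ[K] (G →₀ K), IsReductionOperator C →
        LinearMap.ker T₁ ≤ LinearMap.ker C → LinearMap.ker T₂ ≤ LinearMap.ker C →
        LinearMap.ker M ≤ LinearMap.ker C) ∧
      -- J is an upper bound of T₁ and T₂ for ⪯
      LinearMap.ker J ≤ LinearMap.ker T₁ ∧ LinearMap.ker J ≤ LinearMap.ker T₂ ∧
      -- J is the least upper bound
      (∀ C : (G →₀ K) →ₗ[K] (G →₀ K), IsReductionOperator C →
        LinearMap.ker C ≤ LinearMap.ker T₁ → LinearMap.ker C ≤ LinearMap.ker T₂ →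
        LinearMap.ker C ≤ LinearMap.ker J) :=
  stmt_6_general T₁ T₂
end

section
/- Let T₁ and T₂ be reduction operators relative to a well-ordered set (G, <) such that ker(T₁) ⊆ ker(T₂). Then T₂ ∘ T₁ = T₂. -/
theorem stmt_7 {K G : Type*} [Field K] [LinearOrder G] [WellFoundedLT G]
    (T₁ T₂ : (G →₀ K) →ₗ[K] (G →₀ K))
    (h₁ : IsReductionOperator T₁) (h₂ : IsReductionOperator T₂)
    (hker : LinearMap.ker T₁ ≤ LinearMap.ker T₂) :
    T₂ ∘ₗ T₁ = T₂ := by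
  apply LinearMap.ext; intro x
  have hmem : T₁ x - x ∈ LinearMap.ker T₁ := by
    simp only [LinearMap.mem_ker, map_sub, sub_eq_zero]
    exact congrFun (congrArg DFunLike.coe h₁.1) x
  have := hker hmem
  simp only [LinearMap.mem_ker, map_sub, sub_eq_zero] at this
  simpa using this
end

section
/- Let F = {T_d : d ∈ ℕ} be a family of reduction operators relative to a well-ordered set (G, <) such that the sequence of kernels ker(T_d) is nondecreasing (i.e., ker(T_d) ⊆ ker(T_{d+1}) for all d). Then F is confluent: the set of normal forms of the lower bound ∧F equals the intersection over d of the sets of T_d-normal forms, i.e., Red(∧F) = ⋃_d Red(T_d). -/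
private lemma aux_key {K G : Type*} [Field K] [LinearOrder G]
    (T : (G →₀ K) →ₗ[K] (G →₀ K)) (hT : IsReductionOperator T) (g : G)
    (w : G →₀ K) (hw : ∀ h ∈ w.support, h < g) : (T w) g = 0 := by
  have hrepr : w = ∑ h ∈ w.support, (w h) • Finsupp.single h (1 : K) := by
    conv_lhs => rw [← Finsupp.sum_single w]
    rw [Finsupp.sum]
    refine Finset.sum_congr rfl fun h _ => ?_
    rw [Finsupp.smul_single, smul_eq_mul, mul_one]
  rw [hrepr, map_sum]
  rw [Finsupp.finset_sum_apply]
  refine Finset.sum_eq_zero fun h hh => ?_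
  have hlt := hw h hh
  rw [map_smul, Finsupp.smul_apply]
  have : (T (Finsupp.single h 1)) g = 0 := by
    rcases hT.2 h with heq | hsupp
    · rw [heq, Finsupp.single_apply, if_neg (ne_of_lt hlt)]
    · by_contra hne
      exact absurd (hsupp g (Finsupp.mem_support_iff.mpr hne)) (not_lt.mpr hlt.le)
  rw [this, smul_zero]

/-- A nondecreasing (in kernels) countable family of reduction operators is confluent:
the reducible generators of the lower bound (the reduction operator whose kernel is the
sum, i.e. supremum, of the kernels) are exactly the generators reducible for some member. -/
theorem stmt_8 {K G : Type*} [Field K] [LinearOrder G] [WellFoundedLT G]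
    (T : ℕ → ((G →₀ K) →ₗ[K] (G →₀ K)))
    (hT : ∀ d, IsReductionOperator (T d))
    (hmono : ∀ d, LinearMap.ker (T d) ≤ LinearMap.ker (T (d + 1)))
    (M : (G →₀ K) →ₗ[K] (G →₀ K)) (hM : IsReductionOperator M)
    (hkerM : LinearMap.ker M = ⨆ d, LinearMap.ker (T d)) :
    {g : G | M (Finsupp.single g 1) ≠ Finsupp.single g 1} =
      ⋃ d, {g : G | T d (Finsupp.single g 1) ≠ Finsupp.single g 1} := by
  ext g
  simp only [Set.mem_setOf_eq, Set.mem_iUnion]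
  constructor
  · intro hMg
    -- w := M e_g has support < g
    have hsupp : ∀ h ∈ (M (Finsupp.single g 1)).support, h < g :=
      (hM.2 g).resolve_left hMg
    set w := M (Finsupp.single g 1) with hw
    have hvker : Finsupp.single g 1 - w ∈ LinearMap.ker M := by
      rw [LinearMap.mem_ker, map_sub, hw, ← LinearMap.comp_apply, hM.1, sub_self]
    rw [hkerM] at hvker
    have hdir : Directed (· ≤ ·) fun d => LinearMap.ker (T d) :=
      (monotone_nat_of_le_succ hmono).directed_le
    obtain ⟨d, hd⟩ := (Submodule.mem_iSup_of_directed _ hdir).mp hvker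
    refine ⟨d, fun heq => ?_⟩
    rw [LinearMap.mem_ker, map_sub, heq] at hd
    have := congrArg (fun f : G →₀ K => f g) hd
    simp only [Finsupp.sub_apply, Finsupp.single_eq_same, Finsupp.coe_zero,
      Pi.zero_apply] at this
    rw [aux_key (T d) (hT d) g w hsupp, sub_zero] at this
    exact one_ne_zero this
  · rintro ⟨d, hdg⟩
    intro heq
    have hsupp : ∀ h ∈ (T d (Finsupp.single g 1)).support, h < g :=
      ((hT d).2 g).resolve_left hdg
    set w := T d (Finsupp.single g 1) with hw
    have hvker : Finsupp.single g 1 - w ∈ LinearMap.ker (T d) := by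
      rw [LinearMap.mem_ker, map_sub, hw, ← LinearMap.comp_apply, (hT d).1, sub_self]
    have hvM : Finsupp.single g 1 - w ∈ LinearMap.ker M := by
      rw [hkerM]
      exact le_iSup (fun d => LinearMap.ker (T d)) d hvker
    rw [LinearMap.mem_ker, map_sub, heq] at hvM
    have := congrArg (fun f : G →₀ K => f g) hvM
    simp only [Finsupp.sub_apply, Finsupp.single_eq_same, Finsupp.coe_zero,
      Pi.zero_apply] at this
    rw [aux_key M hM g w hsupp, sub_zero] at this
    exact one_ne_zero this
end

section
/- Let F be a nonempty set of reduction operators relative to a well-ordered set (G, <). Then the set of normal forms of the lower bound ∧F is contained in NF(F) = ⋂_{T∈F} NF(T). -/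
lemma aux_supp {K G : Type*} [Field K] [LinearOrder G]
    (M : (G →₀ K) →ₗ[K] (G →₀ K)) (hM : IsReductionOperator M)
    (x : G →₀ K) : ∀ h ∈ (M x).support, ∃ g ∈ x.support, h ≤ g := by
  intro h hh
  have hx : x = ∑ g ∈ x.support, x g • Finsupp.single g (1 : K) := by
    conv_lhs => rw [← Finsupp.sum_single x]
    rw [Finsupp.sum]
    refine Finset.sum_congr rfl fun g _ => ?_
    rw [Finsupp.smul_single, smul_eq_mul, mul_one]
  rw [hx, map_sum] at hh
  obtain ⟨g, hg, hmem⟩ := Finset.mem_biUnion.mp (Finsupp.support_finset_sum hh)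
  refine ⟨g, hg, ?_⟩
  rw [map_smul] at hmem
  have hmem' : h ∈ (M (Finsupp.single g 1)).support := Finsupp.support_smul hmem
  rcases hM.2 g with heq | hlt
  · rw [heq, Finsupp.support_single_ne_zero _ one_ne_zero] at hmem'
    simp only [Finset.mem_singleton] at hmem'
    exact le_of_eq hmem'
  · exact le_of_lt (hlt h hmem')

theorem stmt_9 {K G : Type*} [Field K] [LinearOrder G] [WellFoundedLT G]
    (F : Set ((G →₀ K) →ₗ[K] (G →₀ K))) (hF : F.Nonempty)
    (hro : ∀ T ∈ F, IsReductionOperator T)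
    (M : (G →₀ K) →ₗ[K] (G →₀ K)) (hM : IsReductionOperator M)
    (hkerM : LinearMap.ker M = ⨆ T ∈ F, LinearMap.ker T) :
    {g : G | M (Finsupp.single g 1) = Finsupp.single g 1} ⊆
      ⋂ T ∈ F, {g : G | T (Finsupp.single g 1) = Finsupp.single g 1} := by
  intro g hg
  simp only [Set.mem_setOf_eq] at hg
  simp only [Set.mem_iInter, Set.mem_setOf_eq]
  intro T hT
  obtain ⟨hTT, hTle⟩ := hro T hT
  by_contra hne
  have hker : Finsupp.single g (1 : K) - T (Finsupp.single g 1) ∈ LinearMap.ker T := by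
    rw [LinearMap.mem_ker, map_sub, ← LinearMap.comp_apply, hTT, sub_self]
  have hkerM' : Finsupp.single g (1 : K) - T (Finsupp.single g 1) ∈ LinearMap.ker M := by
    rw [hkerM]
    exact (le_iSup₂ (f := fun (T : (G →₀ K) →ₗ[K] (G →₀ K)) (_ : T ∈ F) => LinearMap.ker T) T hT) hker
  have hMeq : M (T (Finsupp.single g 1)) = Finsupp.single g 1 := by
    rw [LinearMap.mem_ker, map_sub, sub_eq_zero] at hkerM'
    rw [← hkerM', hg]
  have hgsupp : g ∈ (M (T (Finsupp.single g (1:K)))).support := by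
    rw [hMeq]
    simp [Finsupp.mem_support_iff]
  obtain ⟨h, hh, hle⟩ := aux_supp M hM _ g hgsupp
  rcases hTle g with heq | hlt
  · exact hne heq
  · exact absurd (hlt h hh) (not_lt.mpr hle)
end

section
/- Let F be a nonempty set of reduction operators relative to a well-ordered set (G, <), and let C ∈ RO(G, <) satisfy (∧F) ∧ C = ∧F. If F ∪ {C} is confluent, then every element of Obs(F) = NF(F) \ NF(∧F) is C-reducible. -/
/-- If `(∧F) ∧ C = ∧F` (i.e. `ker C ⊆ ker (∧F)`) and `F ∪ {C}` is confluent, then every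
element of `Obs(F) = NF(F) \ NF(∧F)` is `C`-reducible. Here `M` denotes the lower bound
`∧F`, the reduction operator whose kernel is the sum of kernels of members of `F`; note
that `ker C ⊆ ker M` forces `∧(F ∪ {C}) = M`. -/
theorem stmt_11 {K G : Type*} [Field K] [LinearOrder G] [WellFoundedLT G]
    (F : Set ((G →₀ K) →ₗ[K] (G →₀ K))) (hne : F.Nonempty)
    (hro : ∀ T ∈ F, IsReductionOperator T)
    (M : (G →₀ K) →ₗ[K] (G →₀ K)) (hM : IsReductionOperator M)
    (hkerM : LinearMap.ker M = ⨆ T ∈ F, LinearMap.ker T)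
    (C : (G →₀ K) →ₗ[K] (G →₀ K)) (hC : IsReductionOperator C)
    -- (∧F) ∧ C = ∧F
    (hmeet : LinearMap.ker C ≤ LinearMap.ker M)
    -- F ∪ {C} is confluent
    (hconf : {g : G | M (Finsupp.single g 1) = Finsupp.single g 1} =
      ⋂ T ∈ (F ∪ {C}), {g : G | T (Finsupp.single g 1) = Finsupp.single g 1}) :
    ∀ g : G,
      g ∈ ((⋂ T ∈ F, {g : G | T (Finsupp.single g 1) = Finsupp.single g 1}) \
        {g : G | M (Finsupp.single g 1) = Finsupp.single g 1}) →
      C (Finsupp.single g 1) ≠ Finsupp.single g 1 := by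
  rintro g ⟨h1, h2⟩ hCg
  apply h2
  have : g ∈ ⋂ T ∈ (F ∪ {C}), {g : G | T (Finsupp.single g 1) = Finsupp.single g 1} := by
    simp only [Set.mem_iInter] at h1 ⊢
    rintro T (hT | hT)
    · exact h1 T hT
    · rw [Set.mem_singleton_iff] at hT; subst hT; exact hCg
  rw [← hconf] at this
  exact this
end

section
/- Let X = {x, y, z} with the deg-lex order induced by x < y < z, and let R = {yz − x, zx − xy, yxy − xx, yxx − xxz, yxxx − xxxy} ⊂ K⟨X*⟩. Then R is a noncommutative Gröbner basis of the two-sided ideal it generates: every overlap ambiguity of R is solvable, equivalently all S-polynomials of R reduce to zero modulo R. -/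
/-!
Orient the relations towards the deg-lex smaller side: `yz → x`, `zx → xy`, `yxy → xx`,
`yxx → xxz`; the fifth relation is then a consequence, `yxxx → xxzx → xxxy`. Every rewriting
step lowers a word in the deg-lex order, so rewriting terminates, and every critical pair
(ambiguity) is joinable, so by Newman's lemma each word has a unique normal form. Having the same
normal form is a monoid congruence containing the relations, so the induced ring map out of
`K⟨x, y, z⟩` kills the ideal. If the leading monomial `w` of a nonzero `f` in the ideal were
irreducible, `w` would be the only monomial of `f` with normal form `w`, since normal forms only
go down; the image of `f` would then have the nonzero coefficient `f_w` at `w`. So `w` contains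
the leading monomial of one of the relations.
-/

/-- The operator `S_{n,m}` extending `S` : it fixes monomials of length `< n + m`, and
sends `w = w₁w₂w₃` with `|w₁| = n`, `|w₃| = m` to `w₁ ⬝ S(w₂) ⬝ w₃`. -/
noncomputable def extOp {K X : Type*} [Field K]
    (S : MonoidAlgebra K (FreeMonoid X) →ₗ[K] MonoidAlgebra K (FreeMonoid X)) (n m : ℕ) :
    MonoidAlgebra K (FreeMonoid X) →ₗ[K] MonoidAlgebra K (FreeMonoid X) :=
  (Finsupp.lift (MonoidAlgebra K (FreeMonoid X)) K (FreeMonoid X) fun w =>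
    if w.length < n + m then MonoidAlgebra.single w 1
    else
      MonoidAlgebra.single (FreeMonoid.ofList (w.toList.take n)) (1 : K) *
        S (MonoidAlgebra.single
            (FreeMonoid.ofList ((w.toList.drop n).take (w.toList.length - n - m))) 1) *
        MonoidAlgebra.single (FreeMonoid.ofList (w.toList.drop (w.toList.length - m))) (1 : K))
    ∘ₗ (MonoidAlgebra.coeffLinearEquiv K).toLinearMap

/-- The degree-lexicographic order on monomials over the alphabet `{x, y, z}` (realised
as `Fin 3` with `x = 0 < y = 1 < z = 2`): compare first by length, then
lexicographically. -/
noncomputable instance : LinearOrder (FreeMonoid (Fin 3)) :=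
  LinearOrder.lift' (fun w : FreeMonoid (Fin 3) => toLex (w.length, w.toList))
    (fun a b h => FreeMonoid.toList.injective (congrArg (fun p => (ofLex p).2) h))

/-- The generator `x`. -/
def x : FreeMonoid (Fin 3) := FreeMonoid.of 0
/-- The generator `y`. -/
def y : FreeMonoid (Fin 3) := FreeMonoid.of 1
/-- The generator `z`. -/
def z : FreeMonoid (Fin 3) := FreeMonoid.of 2

open scoped Classical in
/-- The reduction operator with `S(yz) = x`, `S(zx) = xy` and `S(w) = w` otherwise. -/
noncomputable def Sop (K : Type*) [Field K] :
    MonoidAlgebra K (FreeMonoid (Fin 3)) →ₗ[K] MonoidAlgebra K (FreeMonoid (Fin 3)) :=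
  (Finsupp.lift (MonoidAlgebra K (FreeMonoid (Fin 3))) K (FreeMonoid (Fin 3)) fun w =>
    if w = y * z then MonoidAlgebra.single x 1
    else if w = z * x then MonoidAlgebra.single (x * y) 1
    else MonoidAlgebra.single w 1)
    ∘ₗ (MonoidAlgebra.coeffLinearEquiv K).toLinearMap

/-- `w` is the leading monomial of `f`. -/
def IsLm {K : Type*} [Field K] (f : MonoidAlgebra K (FreeMonoid (Fin 3)))
    (w : FreeMonoid (Fin 3)) : Prop :=
  w ∈ f.coeff.support ∧ ∀ u ∈ f.coeff.support, u ≤ w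

/-- `R` is a noncommutative Gröbner basis of the two-sided ideal `I`: the leading
monomials of elements of `R` generate the monomial ideal of leading monomials of `I`. -/
def IsGroebnerBasis {K : Type*} [Field K] (R : Set (MonoidAlgebra K (FreeMonoid (Fin 3))))
    (I : TwoSidedIdeal (MonoidAlgebra K (FreeMonoid (Fin 3)))) : Prop :=
  ∀ f ∈ I, f ≠ 0 → ∃ r ∈ R, ∃ a b wf wr : FreeMonoid (Fin 3),
    IsLm f wf ∧ IsLm r wr ∧ wf = a * wr * b

namespace Relation

variable {α : Type*} {r : α → α → Prop}

theorem ReflTransGen.eq_of_irreducible {a b : α} (h : ReflTransGen r a b) (ha : ∀ c, ¬ r a c) :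
    a = b := by
  rcases h.cases_head with rfl | ⟨c, hac, -⟩
  · rfl
  · exact absurd hac (ha c)

theorem exists_reflTransGen_irreducible (hwf : WellFounded (flip r)) (a : α) :
    ∃ b, ReflTransGen r a b ∧ ∀ c, ¬ r b c := by
  induction a using hwf.induction with
  | _ a ih =>
  by_cases h : ∃ b, r a b
  · obtain ⟨b, hab⟩ := h
    obtain ⟨c, hbc, hc⟩ := ih b hab
    exact ⟨c, .head hab hbc, hc⟩
  · exact ⟨a, .refl, fun c hac => h ⟨c, hac⟩⟩

theorem newman (hwf : WellFounded (flip r))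
    (hlc : ∀ a b c, r a b → r a c → Join (ReflTransGen r) b c) {a b c : α}
    (hab : ReflTransGen r a b) (hac : ReflTransGen r a c) : Join (ReflTransGen r) b c := by
  induction a using hwf.induction generalizing b c with
  | _ a ih =>
  rcases hab.cases_head with rfl | ⟨b₁, hab₁, hb₁b⟩
  · exact ⟨c, hac, .refl⟩
  rcases hac.cases_head with rfl | ⟨c₁, hac₁, hc₁c⟩
  · exact ⟨b, .refl, hab⟩
  obtain ⟨d, hb₁d, hc₁d⟩ := hlc a b₁ c₁ hab₁ hac₁
  obtain ⟨e, hbe, hde⟩ := ih b₁ hab₁ hb₁b hb₁d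
  obtain ⟨g, heg, hcg⟩ := ih c₁ hac₁ (hc₁d.trans hde) hc₁c
  exact ⟨g, hbe.trans heg, hcg⟩

end Relation

namespace MonoidAlgebra

theorem exists_ne_map_eq_of_mapDomain_eq_zero {R M N : Type*} [Semiring R] (φ : M → N)
    {f : R[M]} (hf : mapDomain φ f = 0) {w : M} (hw : w ∈ f.coeff.support) :
    ∃ u ∈ f.coeff.support, u ≠ w ∧ φ u = φ w := by
  by_contra! h
  have : (mapDomain φ f).coeff (φ w) = f.coeff w := by
    rw [coeff_mapDomain, Finsupp.mapDomain, Finsupp.sum_apply, Finsupp.sum,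
      Finset.sum_eq_single w]
    · exact Finsupp.single_eq_same
    · exact fun u hu huw => Finsupp.single_eq_of_ne (h u hu huw).symm
    · exact fun hw' => absurd hw hw'
  rw [hf, coeff_zero, Finsupp.zero_apply] at this
  exact Finsupp.mem_support_iff.mp hw this.symm

theorem single_sub_single_mem_ker {R M : Type*} [Ring R] [Monoid M] {c : Con M} {a b : M}
    (h : c a b) (r : R) :
    single a r - single b r ∈ TwoSidedIdeal.ker (mapDomainRingHom R c.mk') := by
  have hab : c.mk' a = c.mk' b := c.eq.mpr h
  rw [TwoSidedIdeal.mem_ker, map_sub, mapDomainRingHom_apply, mapDomainRingHom_apply,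
    mapDomain_single, mapDomain_single, hab, sub_self]

end MonoidAlgebra

namespace GroebnerXYZ

open Relation

def base3Value : List (Fin 3) → ℕ
  | [] => 0
  | a :: t => a.val * 3 ^ t.length + base3Value t

theorem base3Value_lt (w : List (Fin 3)) : base3Value w < 3 ^ w.length := by
  induction w with
  | nil => simp [base3Value]
  | cons a t ih =>
    have : a.val ≤ 2 := by omega
    simp only [base3Value, List.length_cons, pow_succ]
    nlinarith

theorem base3Value_lt_of_lex {u w : List (Fin 3)} (hlen : u.length = w.length)
    (h : List.Lex (· < ·) u w) : base3Value u < base3Value w := by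
  induction h with
  | nil => simp at hlen
  | @rel a u b w hab =>
    have hlen' : u.length = w.length := by simpa using hlen
    have hu := base3Value_lt u
    have hab' : a.val + 1 ≤ b.val := hab
    have := Nat.mul_le_mul_right (3 ^ w.length) hab'
    simp only [base3Value, hlen'] at hu ⊢
    nlinarith
  | @cons a u w _ ih =>
    have hlen' : u.length = w.length := by simpa using hlen
    simp only [base3Value, hlen']
    have := ih hlen'
    omega

def degLexRank (w : List (Fin 3)) : ℕ := 3 ^ w.length + base3Value w

theorem degLexRank_strictMono : StrictMono fun w : FreeMonoid (Fin 3) => degLexRank w.toList := by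
  intro u w h
  rcases Prod.Lex.lt_iff.mp h with hlen | ⟨hlen, hlex⟩
  · have hu := base3Value_lt u.toList
    have : 3 ^ u.toList.length * 3 ≤ 3 ^ w.toList.length :=
      pow_succ 3 u.toList.length ▸ Nat.pow_le_pow_right (by norm_num) hlen
    simp only [degLexRank]
    omega
  · have hlen : u.toList.length = w.toList.length := hlen
    have := base3Value_lt_of_lex hlen hlex
    simp only [degLexRank, hlen]
    omega

/-- One rewriting step by the first four relations, with `x, y, z` written `0, 1, 2`. -/
inductive Step : List (Fin 3) → List (Fin 3) → Prop
  | yz (t : List (Fin 3)) : Step (1 :: 2 :: t) (0 :: t)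
  | zx (t : List (Fin 3)) : Step (2 :: 0 :: t) (0 :: 1 :: t)
  | yxy (t : List (Fin 3)) : Step (1 :: 0 :: 1 :: t) (0 :: 0 :: t)
  | yxx (t : List (Fin 3)) : Step (1 :: 0 :: 0 :: t) (0 :: 0 :: 2 :: t)
  | cons (a : Fin 3) {w u : List (Fin 3)} : Step w u → Step (a :: w) (a :: u)

namespace Step

theorem length_le {w u : List (Fin 3)} (h : Step w u) : u.length ≤ w.length := by
  induction h <;> simp_all

theorem degLexRank_lt {w u : List (Fin 3)} (h : Step w u) : degLexRank u < degLexRank w := by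
  induction h with
  | cons a h ih =>
    have hpow := Nat.pow_le_pow_right (by norm_num : 0 < 3) h.length_le
    have := Nat.mul_le_mul_left a.val hpow
    simp only [degLexRank, base3Value, List.length_cons, pow_succ] at *
    omega
  | _ t =>
    have := base3Value_lt t
    simp only [degLexRank, base3Value, List.length_cons, pow_succ, Fin.val_zero, Fin.val_one,
      Fin.val_two]
    omega

theorem wellFounded_flip : WellFounded (flip Step) :=
  Subrelation.wf (fun h => h.degLexRank_lt) (measure degLexRank).wf

theorem append_right {w u : List (Fin 3)} (b : List (Fin 3)) (h : Step w u) :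
    Step (w ++ b) (u ++ b) := by
  induction h with
  | yz t => exact .yz (t ++ b)
  | zx t => exact .zx (t ++ b)
  | yxy t => exact .yxy (t ++ b)
  | yxx t => exact .yxx (t ++ b)
  | cons a _ ih => exact .cons a ih

theorem append_left {w u : List (Fin 3)} (a : List (Fin 3)) (h : Step w u) :
    Step (a ++ w) (a ++ u) := by
  induction a with
  | nil => exact h
  | cons c a ih => exact .cons c ih

theorem exists_mul_eq {w u : List (Fin 3)} (h : Step w u) :
    ∃ a b : FreeMonoid (Fin 3), FreeMonoid.ofList w = a * (y * z) * b ∨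
      FreeMonoid.ofList w = a * (z * x) * b ∨ FreeMonoid.ofList w = a * (y * x * y) * b ∨
      FreeMonoid.ofList w = a * (y * x * x) * b := by
  induction h with
  | yz t => exact ⟨1, .ofList t, .inl rfl⟩
  | zx t => exact ⟨1, .ofList t, .inr (.inl rfl)⟩
  | yxy t => exact ⟨1, .ofList t, .inr (.inr (.inl rfl))⟩
  | yxx t => exact ⟨1, .ofList t, .inr (.inr (.inr rfl))⟩
  | cons c _ ih =>
    obtain ⟨a, b, hab⟩ := ih
    refine ⟨.of c * a, b, ?_⟩
    simp only [FreeMonoid.ofList_cons, mul_assoc] at hab ⊢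
    rcases hab with h | h | h | h <;> simp [h]

end Step

abbrev Star : List (Fin 3) → List (Fin 3) → Prop := ReflTransGen Step

theorem Star.append_right {w u : List (Fin 3)} (b : List (Fin 3)) (h : Star w u) :
    Star (w ++ b) (u ++ b) :=
  h.lift (· ++ b) fun _ _ h => h.append_right b

theorem Star.append_left {w u : List (Fin 3)} (a : List (Fin 3)) (h : Star w u) :
    Star (a ++ w) (a ++ u) :=
  h.lift (a ++ ·) fun _ _ h => h.append_left a

theorem Star.cons (a : Fin 3) {w u : List (Fin 3)} (h : Star w u) : Star (a :: w) (a :: u) :=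
  h.append_left [a]

theorem Star.degLexRank_le {w u : List (Fin 3)} (h : Star w u) : degLexRank u ≤ degLexRank w := by
  induction h with
  | refl => exact le_rfl
  | tail _ hstep ih => exact hstep.degLexRank_lt.le.trans ih

-- The overlap ambiguities are `yzx`, `yxyz`, `yxyxy` and `yxyxx`; all other pairs of redexes
-- are disjoint and join trivially.
theorem join_yz {t v : List (Fin 3)} (h : Step (1 :: 2 :: t) v) : Join Star (0 :: t) v := by
  cases h with
  | yz => exact ⟨_, .refl, .refl⟩
  | cons _ h =>
    cases h with
    | zx t => exact ⟨0 :: 0 :: t, .refl, .single (.yxy t)⟩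
    | cons _ h => exact ⟨0 :: _, .single (.cons 0 h), .single (.yz _)⟩

theorem join_zx {t v : List (Fin 3)} (h : Step (2 :: 0 :: t) v) : Join Star (0 :: 1 :: t) v := by
  rcases h with _ | _ | _ | _ | ⟨_, _ | _ | _ | _ | ⟨_, h⟩⟩
  · exact ⟨_, .refl, .refl⟩
  · exact ⟨0 :: 1 :: _, .single (.cons 0 (.cons 1 h)), .single (.zx _)⟩

theorem join_yxy {t v : List (Fin 3)} (h : Step (1 :: 0 :: 1 :: t) v) :
    Join Star (0 :: 0 :: t) v := by
  rcases h with _ | _ | _ | _ | ⟨_, _ | _ | _ | _ | ⟨_, h⟩⟩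
  · exact ⟨_, .refl, .refl⟩
  cases h with
  | yz t => exact ⟨0 :: 0 :: 2 :: t, .refl, .single (.yxx t)⟩
  | yxy t =>
    exact ⟨0 :: 0 :: 0 :: 1 :: t, .refl,
      .head (.yxx (0 :: t)) (.single (.cons 0 (.cons 0 (.zx t))))⟩
  | yxx t =>
    exact ⟨0 :: 0 :: 0 :: 0 :: t, .refl,
      .head (.yxx (0 :: 2 :: t))
        (.head (.cons 0 (.cons 0 (.zx (2 :: t))))
          (.single (.cons 0 (.cons 0 (.cons 0 (.yz t))))))⟩
  | cons _ h => exact ⟨0 :: 0 :: _, .single (.cons 0 (.cons 0 h)), .single (.yxy _)⟩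

theorem join_yxx {t v : List (Fin 3)} (h : Step (1 :: 0 :: 0 :: t) v) :
    Join Star (0 :: 0 :: 2 :: t) v := by
  rcases h with _ | _ | _ | _ | ⟨_, _ | _ | _ | _ | ⟨_, _ | _ | _ | _ | ⟨_, h⟩⟩⟩
  · exact ⟨_, .refl, .refl⟩
  · exact ⟨0 :: 0 :: 2 :: _, .single (.cons 0 (.cons 0 (.cons 2 h))), .single (.yxx _)⟩

theorem Step.join {w u v : List (Fin 3)} (hu : Step w u) (hv : Step w v) : Join Star u v := by
  induction hu generalizing v with
  | yz => exact join_yz hv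
  | zx => exact join_zx hv
  | yxy => exact join_yxy hv
  | yxx => exact join_yxx hv
  | cons a hu ih =>
    cases hv with
    | yz => exact symm (join_yz (.cons _ hu))
    | zx => exact symm (join_zx (.cons _ hu))
    | yxy => exact symm (join_yxy (.cons _ hu))
    | yxx => exact symm (join_yxx (.cons _ hu))
    | cons _ hv =>
      obtain ⟨c, huc, hvc⟩ := ih hv
      exact ⟨a :: c, huc.cons a, hvc.cons a⟩

theorem exists_star_irreducible (w : List (Fin 3)) : ∃ u, Star w u ∧ ∀ v, ¬ Step u v :=
  exists_reflTransGen_irreducible Step.wellFounded_flip w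

noncomputable def nf (w : List (Fin 3)) : List (Fin 3) := (exists_star_irreducible w).choose

theorem star_nf (w : List (Fin 3)) : Star w (nf w) := (exists_star_irreducible w).choose_spec.1

theorem nf_irreducible (w v : List (Fin 3)) : ¬ Step (nf w) v :=
  (exists_star_irreducible w).choose_spec.2 v

theorem Star.nf_eq {w u : List (Fin 3)} (h : Star w u) : nf w = nf u := by
  obtain ⟨c, hwc, huc⟩ :=
    newman Step.wellFounded_flip (fun _ _ _ => Step.join) (star_nf w) (h.trans (star_nf u))
  rw [hwc.eq_of_irreducible (nf_irreducible w), huc.eq_of_irreducible (nf_irreducible u)]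

theorem nf_eq_self {w : List (Fin 3)} (h : ∀ v, ¬ Step w v) : nf w = w :=
  ((star_nf w).eq_of_irreducible h).symm

theorem nf_append (a b : List (Fin 3)) : nf (a ++ b) = nf (nf a ++ nf b) :=
  Star.nf_eq (((star_nf a).append_right b).trans ((star_nf b).append_left _))

noncomputable def nfCon : Con (FreeMonoid (Fin 3)) where
  r u v := nf u.toList = nf v.toList
  iseqv := ⟨fun _ => rfl, Eq.symm, Eq.trans⟩
  mul' {a a' b b'} ha hb := by
    simp only [FreeMonoid.toList_mul]
    rw [nf_append, ha, hb, ← nf_append]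

theorem nfCon_of_star {u v : FreeMonoid (Fin 3)} (h : Star u.toList v.toList) : nfCon u v :=
  h.nf_eq

section LeadingMonomial

variable {K : Type*} [Field K]

theorem exists_isLm {f : MonoidAlgebra K (FreeMonoid (Fin 3))} (hf : f ≠ 0) :
    ∃ w, IsLm f w := by
  have hne : f.coeff.support.Nonempty :=
    Finsupp.support_nonempty_iff.mpr (by rwa [Ne, MonoidAlgebra.coeff_eq_zero])
  exact ⟨_, f.coeff.support.max'_mem hne, f.coeff.support.le_max'⟩

theorem isLm_single_sub_single {w₁ w₂ : FreeMonoid (Fin 3)} (h : w₂ < w₁) :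
    IsLm (MonoidAlgebra.single w₁ (1 : K) - MonoidAlgebra.single w₂ 1) w₁ := by
  constructor
  · simp [h.ne]
  · intro u hu
    rw [MonoidAlgebra.coeff_sub] at hu
    have := Finsupp.support_sub hu
    simp only [MonoidAlgebra.coeff_single, Finsupp.support_single, ne_eq, one_ne_zero,
      not_false_eq_true, Finset.singleton_union, Finset.mem_insert, Finset.mem_singleton] at this
    rcases this with rfl | rfl
    · exact le_rfl
    · exact h.le

theorem exists_step_of_mem_ker {f : MonoidAlgebra K (FreeMonoid (Fin 3))}
    (hf : f ∈ TwoSidedIdeal.ker (MonoidAlgebra.mapDomainRingHom K nfCon.mk'))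
    {w : FreeMonoid (Fin 3)} (hw : IsLm f w) : ∃ v, Step w.toList v := by
  obtain ⟨u, hu, huw, hnf⟩ := MonoidAlgebra.exists_ne_map_eq_of_mapDomain_eq_zero nfCon.mk'
    ((TwoSidedIdeal.mem_ker _).mp hf) hw.1
  by_contra! hirr
  have hnfu : nf u.toList = w.toList := (nfCon.eq.mp hnf).trans (nf_eq_self hirr)
  have hle := (star_nf u.toList).degLexRank_le
  have hlt := degLexRank_strictMono (lt_of_le_of_ne (hw.2 u hu) huw)
  simp only [hnfu] at hle hlt
  omega

end LeadingMonomial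

end GroebnerXYZ

open GroebnerXYZ

theorem stmt_17 {K : Type*} [Field K] :
    IsGroebnerBasis
      ({MonoidAlgebra.single (y * z) 1 - MonoidAlgebra.single x 1,
        MonoidAlgebra.single (z * x) 1 - MonoidAlgebra.single (x * y) 1,
        MonoidAlgebra.single (y * x * y) 1 - MonoidAlgebra.single (x * x) 1,
        MonoidAlgebra.single (y * x * x) 1 - MonoidAlgebra.single (x * x * z) 1,
        MonoidAlgebra.single (y * x * x * x) 1 - MonoidAlgebra.single (x * x * x * y) 1} :
        Set (MonoidAlgebra K (FreeMonoid (Fin 3))))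
      (TwoSidedIdeal.span
        ({MonoidAlgebra.single (y * z) 1 - MonoidAlgebra.single x 1,
          MonoidAlgebra.single (z * x) 1 - MonoidAlgebra.single (x * y) 1,
          MonoidAlgebra.single (y * x * y) 1 - MonoidAlgebra.single (x * x) 1,
          MonoidAlgebra.single (y * x * x) 1 - MonoidAlgebra.single (x * x * z) 1,
          MonoidAlgebra.single (y * x * x * x) 1 - MonoidAlgebra.single (x * x * x * y) 1} :
          Set (MonoidAlgebra K (FreeMonoid (Fin 3))))) := by
  intro f hf hf0
  have hker : f ∈ TwoSidedIdeal.ker (MonoidAlgebra.mapDomainRingHom K nfCon.mk') := by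
    refine TwoSidedIdeal.span_le.mpr ?_ hf
    rintro g (rfl | rfl | rfl | rfl | rfl) <;>
      refine MonoidAlgebra.single_sub_single_mem_ker (nfCon_of_star ?_) 1
    · exact .single (.yz [])
    · exact .single (.zx [])
    · exact .single (.yxy [])
    · exact .single (.yxx [])
    · exact .head (.yxx [0]) (.single (.cons 0 (.cons 0 (.zx []))))
  obtain ⟨w, hw⟩ := exists_isLm hf0
  obtain ⟨v, hv⟩ := exists_step_of_mem_ker hker hw
  obtain ⟨a, b, h | h | h | h⟩ := hv.exists_mul_eq <;> rw [FreeMonoid.ofList_toList] at h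
  · exact ⟨_, by simp, a, b, w, _, hw, isLm_single_sub_single (w₂ := x) (by decide), h⟩
  · exact ⟨_, by simp, a, b, w, _, hw, isLm_single_sub_single (w₂ := x * y) (by decide), h⟩
  · exact ⟨_, by simp, a, b, w, _, hw, isLm_single_sub_single (w₂ := x * x) (by decide), h⟩
  · exact ⟨_, by simp, a, b, w, _, hw,
      isLm_single_sub_single (w₂ := x * x * z) (by decide), h⟩
end
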